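/- arXiv:1909.03018 — 3 statements merged into one kernel-verified Lean document; each statement's English description precedes it below -/
import Mathlib

section
/- Each of the maps α, β, γ of the 3-torus T³ = (ℝ/ℤ)³ is fixed-point free; hence the induced ℤ/2 × ℤ/2 action on T³ is free, so that the quotient B = T³/(ℤ/2 × ℤ/2) is a flat 3-manifold. -/
/-! Each map translates one coordinate circle by the point of order two `1/2`, which has no
fixed points, and a product map has no fixed points as soon as one factor has none. -/

/-- The 3-torus `(ℝ/ℤ)³`. -/
abbrev T3 : Type := AddCircle (1 : ℝ) × AddCircle (1 : ℝ) × AddCircle (1 : ℝ)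

/-- The image of `1/2` in `ℝ/ℤ`. -/
noncomputable def half : AddCircle (1 : ℝ) := ((1/2 : ℝ) : AddCircle (1 : ℝ))

/-- `α(x₁,x₂,x₃) = (x₁+1/2, −x₂+1/2, −x₃)` as a bijection of the 3-torus. -/
noncomputable def alphaT : Equiv.Perm T3 :=
  (Equiv.addRight half).prodCongr
    (((Equiv.neg (AddCircle (1 : ℝ))).trans (Equiv.addRight half)).prodCongr
      (Equiv.neg (AddCircle (1 : ℝ))))

/-- `β(x₁,x₂,x₃) = (−x₁+1/2, −x₂, x₃+1/2)` as a bijection of the 3-torus. -/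
noncomputable def betaT : Equiv.Perm T3 :=
  ((Equiv.neg (AddCircle (1 : ℝ))).trans (Equiv.addRight half)).prodCongr
    ((Equiv.neg (AddCircle (1 : ℝ))).prodCongr (Equiv.addRight half))

/-- `γ(x₁,x₂,x₃) = (−x₁, x₂+1/2, −x₃+1/2)` as a bijection of the 3-torus. -/
noncomputable def gammaT : Equiv.Perm T3 :=
  (Equiv.neg (AddCircle (1 : ℝ))).prodCongr
    ((Equiv.addRight half).prodCongr
      ((Equiv.neg (AddCircle (1 : ℝ))).trans (Equiv.addRight half)))

theorem Equiv.Perm.prodCongr_apply_ne_self_of_left {α β : Type*} {e : Equiv.Perm α}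
    (he : ∀ a, e a ≠ a) (f : Equiv.Perm β) (p : α × β) : e.prodCongr f p ≠ p :=
  fun h => he p.1 (congrArg Prod.fst h)

theorem Equiv.Perm.prodCongr_apply_ne_self_of_right {α β : Type*} (e : Equiv.Perm α)
    {f : Equiv.Perm β} (hf : ∀ b, f b ≠ b) (p : α × β) : e.prodCongr f p ≠ p :=
  fun h => hf p.2 (congrArg Prod.snd h)

theorem Equiv.addRight_apply_ne_self {G : Type*} [AddGroup G] {a : G} (ha : a ≠ 0) (x : G) :
    Equiv.addRight a x ≠ x := by
  simpa using ha

theorem half_ne_zero : half ≠ 0 := by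
  rw [half, ne_eq, AddCircle.coe_eq_zero_iff_of_mem_Ico (by norm_num)]
  norm_num

theorem alphaT_apply_ne_self (x : T3) : alphaT x ≠ x :=
  Equiv.Perm.prodCongr_apply_ne_self_of_left (Equiv.addRight_apply_ne_self half_ne_zero) _ x

theorem betaT_apply_ne_self (x : T3) : betaT x ≠ x :=
  Equiv.Perm.prodCongr_apply_ne_self_of_right _
    (Equiv.Perm.prodCongr_apply_ne_self_of_right _
      (Equiv.addRight_apply_ne_self half_ne_zero)) x

theorem gammaT_apply_ne_self (x : T3) : gammaT x ≠ x :=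
  Equiv.Perm.prodCongr_apply_ne_self_of_right _
    (Equiv.Perm.prodCongr_apply_ne_self_of_left
      (Equiv.addRight_apply_ne_self half_ne_zero) _) x

/-- Each of the maps `α, β, γ` of the 3-torus is fixed-point free; hence every nontrivial
element of the group `{id, α, β, γ} ≅ ℤ/2 × ℤ/2` acts freely on `T³`. -/
theorem statement1 :
    (∀ x : T3, alphaT x ≠ x) ∧ (∀ x : T3, betaT x ≠ x) ∧ (∀ x : T3, gammaT x ≠ x) ∧
    (∀ g : Equiv.Perm T3, g ∈ ({1, alphaT, betaT, gammaT} : Set (Equiv.Perm T3)) →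
      g ≠ 1 → ∀ x : T3, g x ≠ x) := by
  refine ⟨alphaT_apply_ne_self, betaT_apply_ne_self, gammaT_apply_ne_self, ?_⟩
  rintro g (rfl | rfl | rfl | rfl) hg
  · exact absurd rfl hg
  · exact alphaT_apply_ne_self
  · exact betaT_apply_ne_self
  · exact gammaT_apply_ne_self
end

section
/- The dual lattice of M₍₁,₅₎ with respect to the standard dot product on ℚ³ equals {v ∈ ℤ³ : v₁ + v₂ + v₃ is even}, which is exactly the image of M₍₂,₁₂₎ under multiplication by 2. In particular M₍₁,₅₎^∨ and M₍₂,₁₂₎ are isomorphic as modules over ℤ/2 × ℤ/2, where the three nontrivial group elements act on ℚ³ by diag(1,−1,−1), diag(−1,−1,1), diag(−1,1,−1) (so the lattices M₍₁,₅₎ and M₍₂,₁₂₎ are dual to each other). -/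
/-- `ℚ³` as `ℚ × ℚ × ℚ`. -/
abbrev Q3 : Type := ℚ × ℚ × ℚ

/-- The standard dot product on `ℚ³`. -/
def dotQ (v w : Q3) : ℚ := v.1 * w.1 + v.2.1 * w.2.1 + v.2.2 * w.2.2

/-- The dual lattice `M^∨ = {v ∈ ℚ³ : v·m ∈ ℤ for all m ∈ M}`. -/
def dualLat (M : AddSubgroup Q3) : Set Q3 :=
  {v : Q3 | ∀ m ∈ M, ∃ k : ℤ, dotQ v m = (k : ℚ)}

/-- The linear map `diag(1,−1,−1)` on `ℚ³`. -/
def dAQ : Q3 ≃ₗ[ℚ] Q3 :=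
  (LinearEquiv.refl ℚ ℚ).prodCongr ((LinearEquiv.neg ℚ).prodCongr (LinearEquiv.neg ℚ))

/-- The linear map `diag(−1,−1,1)` on `ℚ³`. -/
def dBQ : Q3 ≃ₗ[ℚ] Q3 :=
  (LinearEquiv.neg ℚ).prodCongr ((LinearEquiv.neg ℚ).prodCongr (LinearEquiv.refl ℚ ℚ))

/-- The linear map `diag(−1,1,−1)` on `ℚ³`. -/
def dCQ : Q3 ≃ₗ[ℚ] Q3 :=
  (LinearEquiv.neg ℚ).prodCongr ((LinearEquiv.refl ℚ ℚ).prodCongr (LinearEquiv.neg ℚ))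

/-- The lattice `M₍₁,₅₎ = ℤ³ + ℤ·(1/2,1/2,1/2)`. -/
def M15 : AddSubgroup Q3 :=
  AddSubgroup.closure {(1,0,0), (0,1,0), (0,0,1), (1/2,1/2,1/2)}

/-- The lattice `M₍₁,₁₁₎ = ℤ³ + ℤ·(1/2,1/2,0)`. -/
def M111 : AddSubgroup Q3 :=
  AddSubgroup.closure {(1,0,0), (0,1,0), (0,0,1), (1/2,1/2,0)}

/-- The lattice `M₍₂,₁₂₎ = ℤ³ + ℤ·(1/2,1/2,0) + ℤ·(0,1/2,1/2)`. -/
def M212 : AddSubgroup Q3 :=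
  AddSubgroup.closure {(1,0,0), (0,1,0), (0,0,1), (1/2,1/2,0), (0,1/2,1/2)}

namespace Statement6Aux

def S : Set Q3 := {v : Q3 | ∃ a b c : ℤ, v = ((a : ℚ), (b : ℚ), (c : ℚ)) ∧ Even (a + b + c)}

lemma dot_add (v m n : Q3) : dotQ v (m + n) = dotQ v m + dotQ v n := by
  simp [dotQ]; ring

lemma dot_neg (v m : Q3) : dotQ v (-m) = -dotQ v m := by
  simp [dotQ]; ring

lemma dual_eq_S : dualLat M15 = S := by
  ext v
  constructor
  · intro hv
    obtain ⟨a, ha⟩ := hv (1,0,0) (AddSubgroup.subset_closure (by simp [M15]))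
    obtain ⟨b, hb⟩ := hv (0,1,0) (AddSubgroup.subset_closure (by simp [M15]))
    obtain ⟨c, hc⟩ := hv (0,0,1) (AddSubgroup.subset_closure (by simp [M15]))
    obtain ⟨k, hk⟩ := hv (1/2,1/2,1/2) (AddSubgroup.subset_closure (by simp [M15]))
    simp [dotQ] at ha hb hc hk
    refine ⟨a, b, c, ?_, ⟨k, ?_⟩⟩
    · exact Prod.ext ha (Prod.ext hb hc)
    · have : (a : ℚ) + b + c = 2 * k := by
        rw [← ha, ← hb, ← hc]; linarith [hk]
      have : a + b + c = 2 * k := by exact_mod_cast this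
      omega
  · rintro ⟨a, b, c, rfl, k, hk⟩ m hm
    induction hm using AddSubgroup.closure_induction with
    | mem x hx =>
      rcases hx with h | h | h | h
      · exact ⟨a, by simp [h, dotQ]⟩
      · exact ⟨b, by simp [h, dotQ]⟩
      · exact ⟨c, by simp [h, dotQ]⟩
      · refine ⟨k, ?_⟩
        simp only [Set.mem_singleton_iff] at h
        subst h
        have : (a : ℚ) + b + c = k + k := by exact_mod_cast congrArg (Int.cast : ℤ → ℚ) hk
        simp [dotQ]; linarith
    | zero => exact ⟨0, by simp [dotQ]⟩
    | add x y hx hy ihx ihy =>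
      obtain ⟨p, hp⟩ := ihx; obtain ⟨q, hq⟩ := ihy
      exact ⟨p + q, by rw [dot_add, hp, hq]; push_cast; ring⟩
    | neg x hx ihx =>
      obtain ⟨p, hp⟩ := ihx
      exact ⟨-p, by rw [dot_neg, hp]; push_cast; ring⟩

lemma S_eq_image : S = (fun v : Q3 => (2 : ℚ) • v) '' (M212 : Set Q3) := by
  ext v
  constructor
  · rintro ⟨a, b, c, rfl, k, hk⟩
    refine ⟨(a : ℤ) • ((1/2 : ℚ), (1/2 : ℚ), (0 : ℚ)) + (b - k) • ((0 : ℚ), (1 : ℚ), (0 : ℚ))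
        + (c : ℤ) • ((0 : ℚ), (1/2 : ℚ), (1/2 : ℚ)), ?_, ?_⟩
    · refine add_mem (add_mem ?_ ?_) ?_ <;>
        exact AddSubgroup.zsmul_mem _ (AddSubgroup.subset_closure (by simp [M212])) _
    · have h : (a : ℚ) + b + c = k + k := by exact_mod_cast congrArg (Int.cast : ℤ → ℚ) hk
      show (2 : ℚ) • _ = _
      simp only [Prod.smul_def, Prod.mk_add_mk, zsmul_eq_mul, smul_eq_mul]
      refine Prod.ext ?_ (Prod.ext ?_ ?_) <;> simp <;> push_cast <;> linarith
  · rintro ⟨m, hm, rfl⟩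
    induction hm using AddSubgroup.closure_induction with
    | mem x hx =>
      rcases hx with h | h | h | h | h <;> subst h
      · exact ⟨2, 0, 0, by norm_num [Prod.smul_def], by decide⟩
      · exact ⟨0, 2, 0, by norm_num [Prod.smul_def], by decide⟩
      · exact ⟨0, 0, 2, by norm_num [Prod.smul_def], by decide⟩
      · exact ⟨1, 1, 0, by norm_num [Prod.smul_def], by decide⟩
      · exact ⟨0, 1, 1, by norm_num [Prod.smul_def], by decide⟩
    | zero => exact ⟨0, 0, 0, by norm_num [Prod.smul_def]; rfl, by decide⟩
    | add x y hx hy ihx ihy =>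
      obtain ⟨a, b, c, hv, he⟩ := ihx; obtain ⟨a', b', c', hv', he'⟩ := ihy
      refine ⟨a + a', b + b', c + c', ?_, ?_⟩
      · show (2 : ℚ) • (x + y) = _
        rw [smul_add]; rw [show (2:ℚ) • x = ((a:ℚ),(b:ℚ),(c:ℚ)) from hv,
          show (2:ℚ) • y = ((a':ℚ),(b':ℚ),(c':ℚ)) from hv']
        push_cast; rfl
      · have := he.add he'; rw [show a + a' + (b + b') + (c + c') = (a + b + c) + (a' + b' + c') by ring]; exact this
    | neg x hx ihx =>
      obtain ⟨a, b, c, hv, he⟩ := ihx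
      refine ⟨-a, -b, -c, ?_, ?_⟩
      · show (2 : ℚ) • (-x) = _
        rw [smul_neg, show (2:ℚ) • x = ((a:ℚ),(b:ℚ),(c:ℚ)) from hv]
        push_cast; rfl
      · have := he.neg; rw [show -a + -b + -c = -(a + b + c) by ring]; exact this

end Statement6Aux

/-- The dual lattice of `M₍₁,₅₎` is `{v ∈ ℤ³ : v₁+v₂+v₃ even}`, which is exactly the image of
`M₍₂,₁₂₎` under multiplication by `2`; in particular multiplication by `2` is a
`ℤ/2 × ℤ/2`-equivariant isomorphism from `M₍₂,₁₂₎` onto `M₍₁,₅₎^∨` (where the three nontrivial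
group elements act by `diag(1,−1,−1)`, `diag(−1,−1,1)`, `diag(−1,1,−1)`), so the lattices
`M₍₁,₅₎` and `M₍₂,₁₂₎` are dual to each other. -/
theorem statement6 :
    dualLat M15 =
      {v : Q3 | ∃ a b c : ℤ, v = ((a : ℚ), (b : ℚ), (c : ℚ)) ∧ Even (a + b + c)} ∧
    dualLat M15 = (fun v : Q3 => (2 : ℚ) • v) '' (M212 : Set Q3) ∧
    ∃ e : Q3 ≃ₗ[ℚ] Q3,
      (∀ v : Q3, e v = (2 : ℚ) • v) ∧
      e '' (M212 : Set Q3) = dualLat M15 ∧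
      (∀ v : Q3, e (dAQ v) = dAQ (e v)) ∧
      (∀ v : Q3, e (dBQ v) = dBQ (e v)) ∧
      (∀ v : Q3, e (dCQ v) = dCQ (e v)) := by
  have h1 := Statement6Aux.dual_eq_S
  have h2 := Statement6Aux.S_eq_image
  refine ⟨h1, h1.trans h2, LinearEquiv.smulOfNeZero ℚ Q3 2 (by norm_num), fun v => rfl,
    ?_, fun v => ?_, fun v => ?_, fun v => ?_⟩
  · have : ⇑(LinearEquiv.smulOfNeZero ℚ Q3 2 (by norm_num)) = fun v : Q3 => (2 : ℚ) • v := rfl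
    rw [this, ← h2, ← h1]
  all_goals simp only [LinearEquiv.smulOfNeZero_apply, Units.smul_def, Units.val_mk0, map_smul]
end

section
/- The dual lattice of M₍₁,₁₁₎ with respect to the standard dot product on ℚ³ equals {v ∈ ℤ³ : v₁ + v₂ is even}, which is exactly the image of M₍₁,₁₁₎ under the diagonal linear map diag(2,2,1); since diag(2,2,1) commutes with the diagonal sign action, M₍₁,₁₁₎^∨ is isomorphic to M₍₁,₁₁₎ as a module over ℤ/2 × ℤ/2 (so the lattice M₍₁,₁₁₎ is self-dual). -/
lemma mem_M111 (v : Q3) :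
    v ∈ M111 ↔ ∃ a b c : ℤ, v = ((a:ℚ)/2, (b:ℚ)/2, (c:ℚ)) ∧ Even (a + b) := by
  constructor
  · intro h
    induction h using AddSubgroup.closure_induction with
    | mem x hx =>
        simp only [Set.mem_insert_iff, Set.mem_singleton_iff] at hx
        rcases hx with rfl | rfl | rfl | rfl
        · exact ⟨2, 0, 0, by norm_num, by decide⟩
        · exact ⟨0, 2, 0, by norm_num, by decide⟩
        · exact ⟨0, 0, 1, by norm_num, by decide⟩
        · exact ⟨1, 1, 0, by norm_num, by decide⟩
    | zero => exact ⟨0, 0, 0, by norm_num [Prod.ext_iff], by decide⟩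
    | add x y _ _ hx hy =>
        obtain ⟨a, b, c, rfl, he⟩ := hx
        obtain ⟨a', b', c', rfl, he'⟩ := hy
        refine ⟨a + a', b + b', c + c', by push_cast [Prod.ext_iff, Prod.fst_add, Prod.snd_add]; refine ⟨by ring, by ring, by ring⟩, ?_⟩
        rcases he with ⟨s, hs⟩; rcases he' with ⟨t, ht⟩
        exact ⟨s + t, by omega⟩
    | neg x _ hx =>
        obtain ⟨a, b, c, rfl, he⟩ := hx
        refine ⟨-a, -b, -c, by push_cast [Prod.ext_iff, Prod.fst_neg, Prod.snd_neg]; refine ⟨by ring, by ring, by ring⟩, ?_⟩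
        rcases he with ⟨s, hs⟩; exact ⟨-s, by omega⟩
  · rintro ⟨a, b, c, rfl, s, hs⟩
    have h1 : ((1:ℚ),(0:ℚ),(0:ℚ)) ∈ M111 := AddSubgroup.subset_closure (by simp)
    have h3 : ((0:ℚ),(0:ℚ),(1:ℚ)) ∈ M111 := AddSubgroup.subset_closure (by simp)
    have h4 : ((1/2:ℚ),(1/2:ℚ),(0:ℚ)) ∈ M111 := AddSubgroup.subset_closure (by simp)
    have key : ((a:ℚ)/2, (b:ℚ)/2, (c:ℚ))
        = (s - b) • ((1:ℚ),(0:ℚ),(0:ℚ)) + b • ((1/2:ℚ),(1/2:ℚ),(0:ℚ)) + c • ((0:ℚ),(0:ℚ),(1:ℚ)) := by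
      have hbz : a = 2*s - b := by omega
      have hb : (a:ℚ) = 2*(s:ℚ) - b := by exact_mod_cast hbz
      simp [Prod.ext_iff, zsmul_eq_mul, hb]
      constructor
      · push_cast; ring
      · push_cast; ring
    rw [key]
    exact add_mem (add_mem (AddSubgroup.zsmul_mem _ h1 _) (AddSubgroup.zsmul_mem _ h4 _))
      (AddSubgroup.zsmul_mem _ h3 _)

theorem statement7' :
    dualLat M111 =
      {v : Q3 | ∃ a b c : ℤ, v = ((a : ℚ), (b : ℚ), (c : ℚ)) ∧ Even (a + b)} := by
  ext v
  constructor
  · intro h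
    obtain ⟨k1, h1⟩ := h (1,0,0) (AddSubgroup.subset_closure (by simp))
    obtain ⟨k2, h2⟩ := h (0,1,0) (AddSubgroup.subset_closure (by simp))
    obtain ⟨k3, h3⟩ := h (0,0,1) (AddSubgroup.subset_closure (by simp))
    obtain ⟨k4, h4⟩ := h (1/2,1/2,0) (AddSubgroup.subset_closure (by simp))
    simp only [dotQ] at h1 h2 h3 h4
    norm_num at h1 h2 h3 h4
    refine ⟨k1, k2, k3, by simp [Prod.ext_iff, h1, h2, h3], ?_⟩
    have : (k1:ℚ) + k2 = 2 * k4 := by rw [← h1, ← h2]; linarith [h4]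
    have : k1 + k2 = 2 * k4 := by exact_mod_cast this
    exact ⟨k4, by omega⟩
  · rintro ⟨a, b, c, rfl, s, hs⟩ m hm
    rw [mem_M111] at hm
    obtain ⟨p, q, r, rfl, t, ht⟩ := hm
    have hb : b = 2*s - a := by omega
    have hp : p = 2*t - q := by omega
    subst hb hp
    refine ⟨a*t - a*q + s*q + c*r, ?_⟩
    simp only [dotQ]
    push_cast
    ring

noncomputable def eDiag : Q3 ≃ₗ[ℚ] Q3 :=
  (LinearEquiv.smulOfNeZero ℚ ℚ 2 two_ne_zero).prodCongr
    ((LinearEquiv.smulOfNeZero ℚ ℚ 2 two_ne_zero).prodCongr (LinearEquiv.refl ℚ ℚ))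

lemma eDiag_apply (v : Q3) : eDiag v = (2 * v.1, 2 * v.2.1, v.2.2) := rfl

lemma dAQ_apply (v : Q3) : dAQ v = (v.1, -v.2.1, -v.2.2) := rfl
lemma dBQ_apply (v : Q3) : dBQ v = (-v.1, -v.2.1, v.2.2) := rfl
lemma dCQ_apply (v : Q3) : dCQ v = (-v.1, v.2.1, -v.2.2) := rfl

/-- The dual lattice of `M₍₁,₁₁₎` is `{v ∈ ℤ³ : v₁+v₂ even}`, which is exactly the image of
`M₍₁,₁₁₎` under `diag(2,2,1)`; since `diag(2,2,1)` commutes with the diagonal sign action of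
`ℤ/2 × ℤ/2`, the dual `M₍₁,₁₁₎^∨` is isomorphic to `M₍₁,₁₁₎` as a `ℤ/2 × ℤ/2`-module (so the
lattice `M₍₁,₁₁₎` is self-dual). -/
theorem statement7 :
    dualLat M111 =
      {v : Q3 | ∃ a b c : ℤ, v = ((a : ℚ), (b : ℚ), (c : ℚ)) ∧ Even (a + b)} ∧
    dualLat M111 = (fun v : Q3 => (2 * v.1, 2 * v.2.1, v.2.2)) '' (M111 : Set Q3) ∧
    ∃ e : Q3 ≃ₗ[ℚ] Q3,
      (∀ v : Q3, e v = (2 * v.1, 2 * v.2.1, v.2.2)) ∧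
      e '' (M111 : Set Q3) = dualLat M111 ∧
      (∀ v : Q3, e (dAQ v) = dAQ (e v)) ∧
      (∀ v : Q3, e (dBQ v) = dBQ (e v)) ∧
      (∀ v : Q3, e (dCQ v) = dCQ (e v)) := by
  have himg : dualLat M111 = (fun v : Q3 => (2 * v.1, 2 * v.2.1, v.2.2)) '' (M111 : Set Q3) := by
    rw [statement7']
    ext v
    constructor
    · rintro ⟨a, b, c, rfl, hev⟩
      refine ⟨((a:ℚ)/2, (b:ℚ)/2, (c:ℚ)), (mem_M111 _).2 ⟨a, b, c, rfl, hev⟩, ?_⟩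
      simp [Prod.ext_iff]; refine ⟨by ring, by ring⟩
    · rintro ⟨m, hm, rfl⟩
      obtain ⟨a, b, c, rfl, hev⟩ := (mem_M111 _).1 hm
      exact ⟨a, b, c, by simp [Prod.ext_iff]; refine ⟨by ring, by ring⟩, hev⟩
  refine ⟨statement7', himg, eDiag, eDiag_apply, ?_, ?_, ?_, ?_⟩
  · rw [himg]
    congr 1
  · intro v
    simp only [eDiag_apply, dAQ_apply, Prod.mk.injEq, true_and, and_true]
    and_intros <;> ring
  · intro v
    simp only [eDiag_apply, dBQ_apply, Prod.mk.injEq, true_and, and_true]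
    and_intros <;> ring
  · intro v
    simp only [eDiag_apply, dCQ_apply, Prod.mk.injEq, true_and, and_true]
    and_intros <;> ring
end
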